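/- Let W_0 → … → W_t be a reduced computation of the S-machine M2 with base Q_{i,ℓ} Q_{i,r} (a history sector) and history H. Assume all tape letters of W_0 belong to only one of the alphabets X_{i,ℓ} or X_{i,r}. Then ||H|| ≤ |W_t|_Y and |W_0|_Y ≤ |W_t|_Y. -/

import Mathlib

namespace SM

/-- The hardware of an `S`-machine: a set `Q` of state letters, each belonging to a part
(the parts of the standard base are indexed by integer positions, `part q` being the
position of the part containing `q`), and a set `A` of tape letters, each belonging to
the alphabet of one sector (`sec y = i` means that `y` is a tape letter of the sector
lying between the parts in positions `i` and `i + 1`). -/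
structure Hardware where
  Q : Type
  A : Type
  part : Q → ℤ
  sec : A → ℤ

/-- An admissible word with `k + 1` state letters: `st i` is the `i`-th (signed) state
letter and `w i` is the (reduced) tape word between the `i`-th and `(i+1)`-st state
letters. -/
structure Conf (h : Hardware) (k : ℕ) where
  st : Fin (k + 1) → h.Q × Bool
  w : Fin k → FreeGroup h.A

/-- A rule of an `S`-machine: the part in position `p` has the component
`src p → (a p) (tgt p) (b p)`, and `allow` is the set `Y(θ)` of tape letters allowed in
the admissible words of its domain. -/
structure Rule (h : Hardware) where
  src : ℤ → h.Q
  tgt : ℤ → h.Q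
  a : ℤ → FreeGroup h.A
  b : ℤ → FreeGroup h.A
  allow : h.A → Prop

/-- the index of the sector lying immediately to the right of a signed state letter -/
def rightSec (h : Hardware) (x : h.Q × Bool) : ℤ :=
  if x.2 then h.part x.1 else h.part x.1 - 1

/-- the condition on two consecutive (signed) state letters of an admissible word -/
def adj (h : Hardware) (x x' : h.Q × Bool) : Prop :=
  (x'.2 = x.2 ∧
    h.part x'.1 = (if x.2 then h.part x.1 + 1 else h.part x.1 - 1)) ∨
  x' = (x.1, !x.2)

/-- `W` is an admissible word: consecutive state letters obey the adjacency conditions,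
every tape letter lies in the alphabet of its sector, and the word is reduced. -/
def Admissible (h : Hardware) [DecidableEq h.A] {k : ℕ} (W : Conf h k) : Prop :=
  (∀ i : Fin k, adj h (W.st i.castSucc) (W.st i.succ)) ∧
  (∀ i : Fin k, ∀ l ∈ (W.w i).toWord, h.sec l.1 = rightSec h (W.st i.castSucc)) ∧
  (∀ i : Fin k, W.st i.succ = ((W.st i.castSucc).1, !(W.st i.castSucc).2) →
    W.w i ≠ 1)

variable {h : Hardware}

/-- the word contributed by a rule immediately to the right of a signed state letter -/
def Rmul (θ : Rule h) (x : h.Q × Bool) : FreeGroup h.A :=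
  if x.2 then θ.b (h.part x.1) else (θ.a (h.part x.1))⁻¹

/-- the word contributed by a rule immediately to the left of a signed state letter -/
def Lmul (θ : Rule h) (x : h.Q × Bool) : FreeGroup h.A :=
  if x.2 then θ.a (h.part x.1) else (θ.b (h.part x.1))⁻¹

/-- One application of a rule `θ` to an admissible word `W`, producing `W'`: all state
letters of `W` are source letters of `θ`, all tape letters of `W` are allowed by `θ`,
each state letter is replaced as prescribed by `θ`, and the tape words are multiplied by
the corresponding words (with free reduction, which is automatic in the free group, and
trimming of the first and last tape letters, which is built into the sector
representation). -/
def Apply [DecidableEq h.A] (θ : Rule h) {k : ℕ} (W W' : Conf h k) : Prop :=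
  (∀ i, (W.st i).1 = θ.src (h.part (W.st i).1)) ∧
  (∀ i, W'.st i = (θ.tgt (h.part (W.st i).1), (W.st i).2)) ∧
  (∀ i : Fin k, ∀ l ∈ (W.w i).toWord, θ.allow l.1) ∧
  (∀ i : Fin k, W'.w i = Rmul θ (W.st i.castSucc) * W.w i * Lmul θ (W.st i.succ))

/-- the `Y`-length `|W|_Y` of an admissible word: the number of its tape letters -/
def lenY [DecidableEq h.A] {k : ℕ} (W : Conf h k) : ℕ :=
  ∑ i : Fin k, (W.w i).toWord.length

end SM

namespace M2

/-- tape letters of `M₂`: `Sum.inl y` is a letter of one of the working alphabets `Y_i`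
of `M₁`, and `Sum.inr (i, θ, s)` is the copy of the positive rule `θ` of `M₁` in the
history alphabet `X_{i,ℓ}` (if `s = false`) or `X_{i,r}` (if `s = true`). -/
abbrev A2 (Y Θ : Type) := Y ⊕ (ℤ × Θ × Bool)

/-- The hardware of the `S`-machine `M₂` built from an `S`-machine `M₁` with standard
base `Q_0 Q_1 … Q_n`, state letters `Q` (`partQ q` is the index of the part of `q`),
tape letters `Y` (`secY y = i` means `y ∈ Y_{i+1}`, the alphabet of the sector
`Q_i Q_{i+1}`), and positive rules `Θ`.  The state letter `(q, true)` is the copy of `q`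
in `Q_{i,r}` (position `2i`) and `(q, false)` is its copy in `Q_{i,ℓ}` (position
`2i − 1`); the history sector `Q_{i,ℓ} Q_{i,r}` (positions `2i − 1`, `2i`) has alphabet
`X_i = X_{i,ℓ} ⊔ X_{i,r}`, `1 ≤ i ≤ n − 1`, and the working sector
`Q_{i,r} Q_{i+1,ℓ}` has alphabet `Y_{i+1}`. -/
@[reducible] def hw (Q Y Θ : Type) (partQ : Q → ℤ) (secY : Y → ℤ) (n : ℕ) : SM.Hardware where
  Q := Q × Bool
  A := A2 Y Θ
  part := fun x => if x.2 then 2 * partQ x.1 else 2 * partQ x.1 - 1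
  sec := fun l =>
    match l with
    | Sum.inl y => 2 * secY y
    | Sum.inr z => if 1 ≤ z.1 ∧ z.1 ≤ (n : ℤ) - 1 then 2 * z.1 - 1 else -3

variable {Q Y Θ : Type}

/-- the state letters of a rule of `M₂` obtained from the assignment `q : ℤ → Q` of
state letters of a rule of `M₁` -/
def q2 (q : Θ → ℤ → Q) (θ : Θ) : ℤ → Q × Bool := fun p =>
  if p % 2 = 0 then (q θ (p / 2), true) else (q θ ((p + 1) / 2), false)

/-- the left words of the positive rule `θ_h` of `M₂`: the part of `θ_h` at `Q_{i,r}` is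
`q_{i,r} → h̄_{θ,i} q'_{i,r} b_i` and the part at `Q_{i,ℓ}` is
`q_{i,ℓ} → a_i q'_{i,ℓ} h_{θ,i}⁻¹` -/
def posA (wa : Θ → ℤ → FreeGroup Y) (n : ℕ) (θ : Θ) : ℤ → FreeGroup (A2 Y Θ) :=
  fun p =>
    if p % 2 = 0 then
      (if 1 ≤ p / 2 ∧ p / 2 ≤ (n : ℤ) - 1 then
        FreeGroup.of (Sum.inr (p / 2, θ, true)) else 1)
    else FreeGroup.map Sum.inl (wa θ ((p + 1) / 2))

/-- the right words of the positive rule `θ_h` of `M₂` -/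
def posB (wb : Θ → ℤ → FreeGroup Y) (n : ℕ) (θ : Θ) : ℤ → FreeGroup (A2 Y Θ) :=
  fun p =>
    if p % 2 = 0 then FreeGroup.map Sum.inl (wb θ (p / 2))
    else
      (if 1 ≤ (p + 1) / 2 ∧ (p + 1) / 2 ≤ (n : ℤ) - 1 then
        (FreeGroup.of (Sum.inr ((p + 1) / 2, θ, false)))⁻¹ else 1)

/-- The rules of `M₂`: for every positive rule `θ` of `M₁` (with components
`q_i → (wa θ i) q_i' (wb θ i)`, source letters `src θ i` and target letters `tgt θ i`),
`M₂` has the rule `θ_h = (θ, true)` and its inverse `(θ, false)`; `Y_j(θ_h) = Y_j` for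
every `j` (no tape letters are forbidden). -/
def rule2 (partQ : Q → ℤ) (secY : Y → ℤ) (n : ℕ) (src tgt : Θ → ℤ → Q)
    (wa wb : Θ → ℤ → FreeGroup Y) :
    Θ × Bool → SM.Rule (hw Q Y Θ partQ secY n) := fun r =>
  if r.2 then
    { src := q2 src r.1, tgt := q2 tgt r.1,
      a := posA wa n r.1, b := posB wb n r.1, allow := fun _ => True }
  else
    { src := q2 tgt r.1, tgt := q2 src r.1,
      a := fun p => (posA wa n r.1 p)⁻¹, b := fun p => (posB wb n r.1 p)⁻¹,
      allow := fun _ => True }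

end M2

/-!
In the history sector `Q_{i,ℓ} Q_{i,r}` the rule `θ_h^ε` multiplies the tape word by
`h_{θ,i}^{-ε}` on the left and by `h̄_{θ,i}^ε` on the right, so `W_t = L⁻¹ W₀ R` where `L` and
`R` are the history `H` spelled in `X_{i,ℓ}` and in `X_{i,r}`. Since the computation is
reduced, `H`, hence `L` and `R`, are freely reduced words of length `‖H‖ = t`. If `W₀` is
written in `X_{i,ℓ}` only, then `L⁻¹ W₀` and `R` are written in disjoint alphabets, so
`|W_t| = |L⁻¹ W₀| + t ≥ (|W₀| - t) + t`. The case of `X_{i,r}` is the same after inverting.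
-/

namespace FreeGroup

variable {α β : Type*}

theorem isReduced_ofFn_iff {t : ℕ} {f : Fin t → α × Bool} :
    IsReduced (List.ofFn f) ↔
      ∀ (i : ℕ) (hi : i + 1 < t),
        f ⟨i + 1, hi⟩ ≠ ((f ⟨i, Nat.lt_of_succ_lt hi⟩).1, !(f ⟨i, Nat.lt_of_succ_lt hi⟩).2) := by
  rw [IsReduced, List.isChain_ofFn]
  refine forall₂_congr fun i hi => ?_
  obtain ⟨a, b⟩ := f ⟨i, Nat.lt_of_succ_lt hi⟩
  obtain ⟨a', b'⟩ := f ⟨i + 1, hi⟩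
  cases b <;> cases b' <;> simp [eq_comm]

theorem IsReduced.map_fst {g : α → β} (hg : Function.Injective g) {L : List (α × Bool)}
    (h : IsReduced L) : IsReduced (L.map (Prod.map g id)) :=
  List.isChain_map_of_isChain _ (fun _ _ hab heq => hab (hg heq)) h

theorem eq_inv_mk_ofFn_mul_mul_mk_ofFn {t : ℕ} (w : Fin (t + 1) → FreeGroup α)
    (l r : Fin t → α × Bool)
    (h : ∀ i, w i.succ = (mk [l i])⁻¹ * w i.castSucc * mk [r i]) :
    w (Fin.last t) = (mk (List.ofFn l))⁻¹ * w 0 * mk (List.ofFn r) := by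
  induction t with
  | zero => simp [← one_eq_mk]
  | succ t ih =>
    have ih' := ih (fun i => w i.castSucc) (fun i => l i.castSucc) (fun i => r i.castSucc)
      fun i => by simpa only [Fin.succ_castSucc] using h i.castSucc
    rw [← Fin.succ_last, h, ih', List.ofFn_succ' l, List.ofFn_succ' r, List.concat_eq_append,
      List.concat_eq_append, ← mul_mk, ← mul_mk, Fin.castSucc_zero]
    group

variable [DecidableEq α]

theorem mem_of_mem_toWord_mk {L : List (α × Bool)} {a : α × Bool} (ha : a ∈ (mk L).toWord) :
    a ∈ L := by
  rw [toWord_mk] at ha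
  exact reduce.red.sublist.subset ha

theorem mem_of_mem_toWord_inv {x : FreeGroup α} {a : α × Bool} (ha : a ∈ x⁻¹.toWord) :
    (a.1, !a.2) ∈ x.toWord := by
  rw [toWord_inv, invRev, List.mem_reverse, List.mem_map] at ha
  obtain ⟨b, hb, rfl⟩ := ha
  simpa using hb

theorem mem_of_mem_toWord_mul {x y : FreeGroup α} {a : α × Bool} (ha : a ∈ (x * y).toWord) :
    a ∈ x.toWord ∨ a ∈ y.toWord :=
  List.mem_append.mp ((toWord_mul_sublist x y).subset ha)

theorem IsReduced.norm_mk {L : List (α × Bool)} (h : IsReduced L) : norm (mk L) = L.length := by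
  rw [norm, toWord_mk, h.reduce_eq]

theorem norm_mul_of_separated (P : α → Prop) {x y : FreeGroup α}
    (hx : ∀ a ∈ x.toWord, P a.1) (hy : ∀ a ∈ y.toWord, ¬P a.1) :
    norm (x * y) = norm x + norm y := by
  have hred : IsReduced (x.toWord ++ y.toWord) := by
    refine List.isChain_append.mpr ⟨isReduced_toWord, isReduced_toWord, ?_⟩
    intro a ha b hb hab
    exact absurd (hab ▸ hx a (List.mem_of_mem_getLast? ha)) (hy b (List.mem_of_mem_head? hb))
  rw [norm, toWord_mul, hred.reduce_eq, List.length_append, norm, norm]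

theorem le_norm_mk_inv_mul_mul_mk (P : α → Prop) {L R : List (α × Bool)} {x : FreeGroup α}
    (hL : ∀ a ∈ L, P a.1) (hR : ∀ a ∈ R, ¬P a.1) (hRred : IsReduced R)
    (hlen : L.length ≤ R.length) (hx : ∀ a ∈ x.toWord, P a.1) :
    R.length ≤ norm ((mk L)⁻¹ * x * mk R) ∧ norm x ≤ norm ((mk L)⁻¹ * x * mk R) := by
  set u := (mk L)⁻¹ * x
  have hu : ∀ a ∈ u.toWord, P a.1 := fun a ha => by
    rcases mem_of_mem_toWord_mul ha with ha | ha
    · exact hL (a.1, !a.2) (mem_of_mem_toWord_mk (mem_of_mem_toWord_inv ha))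
    · exact hx a ha
  have hR' : ∀ a ∈ (mk R).toWord, ¬P a.1 := fun a ha => hR a (mem_of_mem_toWord_mk ha)
  have hnorm : norm (u * mk R) = norm u + R.length := by
    rw [norm_mul_of_separated P hu hR', hRred.norm_mk]
  have hx_le : norm x ≤ L.length + norm u :=
    calc norm x = norm (mk L * u) := by simp only [u, mul_inv_cancel_left]
      _ ≤ norm (mk L) + norm u := norm_mul_le _ _
      _ ≤ L.length + norm u := Nat.add_le_add_right norm_mk_le _
  omega

theorem le_norm_mk_inv_mul_mul_mk_of_or (P : α → Prop) {L R : List (α × Bool)} {x : FreeGroup α}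
    (hL : ∀ a ∈ L, P a.1) (hR : ∀ a ∈ R, ¬P a.1) (hLred : IsReduced L) (hRred : IsReduced R)
    (hlen : L.length = R.length) (hx : (∀ a ∈ x.toWord, P a.1) ∨ ∀ a ∈ x.toWord, ¬P a.1) :
    R.length ≤ norm ((mk L)⁻¹ * x * mk R) ∧ norm x ≤ norm ((mk L)⁻¹ * x * mk R) := by
  rcases hx with hx | hx
  · exact le_norm_mk_inv_mul_mul_mk P hL hR hRred hlen.le hx
  · have hinv : ((mk L)⁻¹ * x * mk R)⁻¹ = (mk R)⁻¹ * x⁻¹ * mk L := by group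
    have := le_norm_mk_inv_mul_mul_mk (¬P ·) hR (fun a ha => not_not.mpr (hL a ha)) hLred
      hlen.ge fun a ha => hx (a.1, !a.2) (mem_of_mem_toWord_inv ha)
    rwa [← hinv, norm_inv_eq, norm_inv_eq, hlen] at this

end FreeGroup

namespace M2

open FreeGroup

variable {Q Y Θ : Type} {partQ : Q → ℤ} {secY : Y → ℤ} {n : ℕ}

/-- `historyLetter i false (θ, ε)` is the letter `h_{θ,i}^ε` of `X_{i,ℓ}^{±1}` and
`historyLetter i true (θ, ε)` the letter `h̄_{θ,i}^ε` of `X_{i,r}^{±1}`. -/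
def historyLetter (i : ℤ) (s : Bool) : Θ × Bool → A2 Y Θ × Bool :=
  Prod.map (fun θ => Sum.inr (i, θ, s)) id

theorem isReduced_ofFn_historyLetter {t : ℕ} {hist : Fin t → Θ × Bool}
    (hH : IsReduced (List.ofFn hist)) (i : ℤ) (s : Bool) :
    IsReduced (List.ofFn fun j => historyLetter (Y := Y) i s (hist j)) := by
  have h := hH.map_fst (g := fun θ => (Sum.inr (i, θ, s) : A2 Y Θ)) fun θ θ' h => by simpa using h
  rwa [List.map_ofFn] at h

def IsHistoryBase (i : ℤ) (V : SM.Conf (hw Q Y Θ partQ secY n) 1) : Prop :=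
  (V.st 0).2 = true ∧ (V.st 1).2 = true ∧ (V.st 0).1.2 = false ∧ (V.st 1).1.2 = true ∧
    partQ (V.st 0).1.1 = i ∧ partQ (V.st 1).1.1 = i

theorem q2_two_mul (q : Θ → ℤ → Q) (θ : Θ) (i : ℤ) : q2 q θ (2 * i) = (q θ i, true) := by
  simp [q2]

theorem q2_two_mul_sub_one (q : Θ → ℤ → Q) (θ : Θ) (i : ℤ) :
    q2 q θ (2 * i - 1) = (q θ i, false) := by
  simp [q2]

theorem posA_two_mul (wa : Θ → ℤ → FreeGroup Y) (θ : Θ) {i : ℤ} (hi : 1 ≤ i ∧ i ≤ (n : ℤ) - 1) :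
    posA wa n θ (2 * i) = of (Sum.inr (i, θ, true)) := by
  simp [posA, hi]

theorem posB_two_mul_sub_one (wb : Θ → ℤ → FreeGroup Y) (θ : Θ) {i : ℤ}
    (hi : 1 ≤ i ∧ i ≤ (n : ℤ) - 1) :
    posB wb n θ (2 * i - 1) = (of (Sum.inr (i, θ, false)))⁻¹ := by
  simp [posB, hi]

variable [DecidableEq Y] [DecidableEq Θ]

theorem IsHistoryBase.of_apply (src tgt : Θ → ℤ → Q) (wa wb : Θ → ℤ → FreeGroup Y) {i : ℤ}
    (hsrc : ∀ θ, partQ (src θ i) = i) (htgt : ∀ θ, partQ (tgt θ i) = i)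
    {V V' : SM.Conf (hw Q Y Θ partQ secY n) 1} {r : Θ × Bool} (hV : IsHistoryBase i V)
    (h : SM.Apply (rule2 partQ secY n src tgt wa wb r) V V') : IsHistoryBase i V' := by
  obtain ⟨s0, s1, b0, b1, p0, p1⟩ := hV
  have h0 := h.2.1 0
  have h1 := h.2.1 1
  simp only [hw, b0, b1, p0, p1, Bool.false_eq_true, if_false, if_true] at h0 h1
  obtain ⟨θ, _ | _⟩ := r <;>
    simp_all [IsHistoryBase, rule2, q2_two_mul, q2_two_mul_sub_one]

theorem IsHistoryBase.w_zero_of_apply (src tgt : Θ → ℤ → Q) (wa wb : Θ → ℤ → FreeGroup Y)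
    {i : ℤ} (hi : 1 ≤ i ∧ i ≤ (n : ℤ) - 1)
    {V V' : SM.Conf (hw Q Y Θ partQ secY n) 1} {r : Θ × Bool} (hV : IsHistoryBase i V)
    (h : SM.Apply (rule2 partQ secY n src tgt wa wb r) V V') :
    V'.w 0 = (mk [historyLetter i false r])⁻¹ * V.w 0 * mk [historyLetter i true r] := by
  obtain ⟨s0, s1, b0, b1, p0, p1⟩ := hV
  have hw0 := h.2.2.2 0
  simp only [SM.Rmul, SM.Lmul, Fin.castSucc_zero, Fin.succ_zero_eq_one, hw, s0, s1, b0, b1, p0,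
    p1, Bool.false_eq_true, if_false, if_true] at hw0
  rw [hw0]
  obtain ⟨θ, _ | _⟩ := r <;>
    simp [rule2, historyLetter, posA_two_mul, posB_two_mul_sub_one, hi] <;> rfl

end M2

open SM M2 in
/-- Lemma `w`: let `W₀ → … → W_t` be a reduced computation of `M₂` with base
`Q_{i,ℓ} Q_{i,r}` (a history sector) and history `H`, such that all tape letters of `W₀`
belong to only one of the alphabets `X_{i,ℓ}` or `X_{i,r}`.  Then `‖H‖ ≤ |W_t|_Y` and
`|W₀|_Y ≤ |W_t|_Y`.  The machine `M₁` is given by its standard base `Q_0 … Q_n`, state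
letters `Q`, tape letters `Y` and positive rules `Θ`, and satisfies property (**). -/
theorem m2_history_sector_growth
    (Q Y Θ : Type) [DecidableEq Y] [DecidableEq Θ]
    (n : ℕ) (partQ : Q → ℤ) (secY : Y → ℤ)
    (src tgt : Θ → ℤ → Q) (wa wb : Θ → ℤ → FreeGroup Y)
    -- `M₁` is an `S`-machine with the standard base `Q_0 … Q_n`:
    (hsrc : ∀ θ p, 0 ≤ p → p ≤ (n : ℤ) → partQ (src θ p) = p)
    (htgt : ∀ θ p, 0 ≤ p → p ≤ (n : ℤ) → partQ (tgt θ p) = p)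
    -- a reduced computation of `M₂` consisting of admissible words:
    (t : ℕ) (W : Fin (t + 1) → SM.Conf (hw Q Y Θ partQ secY n) 1)
    (hist : Fin t → Θ × Bool)
    (hstep : ∀ i : Fin t,
      SM.Apply (rule2 partQ secY n src tgt wa wb (hist i)) (W i.castSucc) (W i.succ))
    (hred : ∀ (i : ℕ) (hi : i + 1 < t),
      hist ⟨i + 1, hi⟩ ≠ ((hist ⟨i, by omega⟩).1, !(hist ⟨i, by omega⟩).2))
    -- the base is the history sector `Q_{i₀,ℓ} Q_{i₀,r}`:
    (i0 : ℤ) (hi0 : 1 ≤ i0 ∧ i0 ≤ (n : ℤ) - 1)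
    (hbase : ((W 0).st 0).2 = true ∧ ((W 0).st 1).2 = true ∧
      ((W 0).st 0).1.2 = false ∧ ((W 0).st 1).1.2 = true ∧
      partQ ((W 0).st 0).1.1 = i0 ∧ partQ ((W 0).st 1).1.1 = i0)
    -- all tape letters of `W₀` belong to only one of `X_{i₀,ℓ}`, `X_{i₀,r}`:
    (hside :
      (∀ l ∈ ((W 0).w 0).toWord, ∃ θ : Θ, l.1 = Sum.inr (i0, θ, false)) ∨
      (∀ l ∈ ((W 0).w 0).toWord, ∃ θ : Θ, l.1 = Sum.inr (i0, θ, true))) :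
    t ≤ ((W (Fin.last t)).w 0).toWord.length ∧
    ((W 0).w 0).toWord.length ≤ ((W (Fin.last t)).w 0).toWord.length := by
  have hsrc₀ : ∀ θ, partQ (src θ i0) = i0 := fun θ => hsrc θ i0 (by omega) (by omega)
  have htgt₀ : ∀ θ, partQ (tgt θ i0) = i0 := fun θ => htgt θ i0 (by omega) (by omega)
  have hbase_all : ∀ j, IsHistoryBase i0 (W j) := by
    intro j
    induction j using Fin.induction with
    | zero => exact hbase
    | succ i ih => exact ih.of_apply src tgt wa wb hsrc₀ htgt₀ (hstep i)
  have hW := FreeGroup.eq_inv_mk_ofFn_mul_mul_mk_ofFn (fun j => (W j).w 0)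
    (fun i => historyLetter i0 false (hist i)) (fun i => historyLetter i0 true (hist i))
    fun i => (hbase_all i.castSucc).w_zero_of_apply src tgt wa wb hi0 (hstep i)
  have hH : FreeGroup.IsReduced (List.ofFn hist) := FreeGroup.isReduced_ofFn_iff.2 hred
  have hgrowth := FreeGroup.le_norm_mk_inv_mul_mul_mk_of_or
    (fun a : A2 Y Θ => ∃ θ, a = Sum.inr (i0, θ, false)) (by simp [historyLetter])
    (by simp [historyLetter])
    (isReduced_ofFn_historyLetter hH i0 false) (isReduced_ofFn_historyLetter hH i0 true)
    (by simp) (hside.imp_right fun h l hl ⟨θ', h'⟩ => by obtain ⟨θ, hθ⟩ := h l hl; simp [hθ] at h')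
  rwa [← hW, List.length_ofFn] at hgrowth
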